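/- arXiv:1204.3015 — 6 statements merged into one kernel-verified Lean document; each statement's English description precedes it below -/
import Mathlib

section
/- Let C be a nonzero vector in V with ⟨C,K⟩ = 0. Then ⟨C,C⟩ < 0. In other words, the orthogonal complement K^⊥ of K in V is negative definite with respect to the bilinear form. -/
/-- `V = ℤ⁷`, with coordinate 0 corresponding to `L` and coordinates 1,…,6 to `E₁,…,E₆`. -/
abbrev V : Type := Fin 7 → ℤ

/-- The intersection form: `⟨x,y⟩ = x₀y₀ − Σᵢ xᵢyᵢ`. -/
def form (x y : V) : ℤ := x 0 * y 0 - ∑ i : Fin 6, x i.succ * y i.succ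

/-- The class `L` of a line. -/
def Lv : V := fun j => if j = 0 then 1 else 0

/-- The exceptional classes `E₁,…,E₆` (indexed by `Fin 6`). -/
def Ev (i : Fin 6) : V := fun j => if j = i.succ then 1 else 0

/-- The canonical class `K = −3L + E₁ + ⋯ + E₆`. -/
def Kv : V := -(3 : ℤ) • Lv + ∑ i : Fin 6, Ev i

/-- `𝒱″ = {Eᵢ − Eⱼ : 1 ≤ i < j ≤ 6}`. -/
def Vpp : Set V := {v | ∃ i j : Fin 6, i < j ∧ v = Ev i - Ev j}

/-- `𝒧″ = {L − Eᵢ − Eⱼ − Eₖ : 1 ≤ i < j < k ≤ 6}`. -/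
def Lpp : Set V := {v | ∃ i j k : Fin 6, i < j ∧ j < k ∧ v = Lv - Ev i - Ev j - Ev k}

/-- `𝒬″ = {2L − E₁ − ⋯ − E₆}`. -/
def Qpp : Set V := {v | v = (2 : ℤ) • Lv - ∑ i : Fin 6, Ev i}

/-- `R = 𝒱″ ∪ 𝒧″ ∪ 𝒬″`. -/
def Rset : Set V := Vpp ∪ Lpp ∪ Qpp

/-- A subset `T` is pairwise nonnegative if `⟨C,D⟩ ≥ 0` for all distinct `C,D ∈ T`. -/
def PairwiseNonneg (T : Set V) : Prop := ∀ C ∈ T, ∀ D ∈ T, C ≠ D → 0 ≤ form C D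

set_option maxHeartbeats 1000000 in
/-- `K^⊥` is negative definite. -/
theorem Kperp_negative_definite (C : V) (hC : C ≠ 0) (hK : form C Kv = 0) :
    form C C < 0 := by
  by_contra hge
  push_neg at hge
  simp (config := { decide := true }) only [form, Kv, Lv, Ev, Fin.sum_univ_six, Pi.add_apply,
    Pi.smul_apply, smul_eq_mul,
    show ((0:Fin 6).succ) = 1 from rfl, show ((1:Fin 6).succ) = 2 from rfl,
    show ((2:Fin 6).succ) = 3 from rfl, show ((3:Fin 6).succ) = 4 from rfl,
    show ((4:Fin 6).succ) = 5 from rfl, show ((5:Fin 6).succ) = 6 from rfl] at hK hge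
  norm_num at hK hge
  have hsum : C 1 + C 2 + C 3 + C 4 + C 5 + C 6 = -(3 * C 0) := by linarith
  have hsq : (C 1 + C 2 + C 3 + C 4 + C 5 + C 6) ^ 2 = 9 * C 0 ^ 2 := by rw [hsum]; ring
  have h1 : C 0 ^ 2 ≤ 0 := by
    nlinarith [sq_nonneg (C 1 - C 2), sq_nonneg (C 1 - C 3), sq_nonneg (C 1 - C 4),
      sq_nonneg (C 1 - C 5), sq_nonneg (C 1 - C 6), sq_nonneg (C 2 - C 3),
      sq_nonneg (C 2 - C 4), sq_nonneg (C 2 - C 5), sq_nonneg (C 2 - C 6),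
      sq_nonneg (C 3 - C 4), sq_nonneg (C 3 - C 5), sq_nonneg (C 3 - C 6),
      sq_nonneg (C 4 - C 5), sq_nonneg (C 4 - C 6), sq_nonneg (C 5 - C 6), hsq, hge]
  have h0 : C 0 = 0 := pow_eq_zero_iff two_ne_zero |>.mp (le_antisymm h1 (sq_nonneg _))
  have hs : C 1 * C 1 + C 2 * C 2 + C 3 * C 3 + C 4 * C 4 + C 5 * C 5 + C 6 * C 6 ≤ 0 := by
    nlinarith
  have e1 : C 1 = 0 := mul_self_eq_zero.mp (le_antisymm
    (by linarith [mul_self_nonneg (C 2), mul_self_nonneg (C 3), mul_self_nonneg (C 4), mul_self_nonneg (C 5), mul_self_nonneg (C 6)])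
    (mul_self_nonneg _))
  have e2 : C 2 = 0 := mul_self_eq_zero.mp (le_antisymm
    (by linarith [mul_self_nonneg (C 1), mul_self_nonneg (C 3), mul_self_nonneg (C 4), mul_self_nonneg (C 5), mul_self_nonneg (C 6)])
    (mul_self_nonneg _))
  have e3 : C 3 = 0 := mul_self_eq_zero.mp (le_antisymm
    (by linarith [mul_self_nonneg (C 1), mul_self_nonneg (C 2), mul_self_nonneg (C 4), mul_self_nonneg (C 5), mul_self_nonneg (C 6)])
    (mul_self_nonneg _))
  have e4 : C 4 = 0 := mul_self_eq_zero.mp (le_antisymm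
    (by linarith [mul_self_nonneg (C 1), mul_self_nonneg (C 2), mul_self_nonneg (C 3), mul_self_nonneg (C 5), mul_self_nonneg (C 6)])
    (mul_self_nonneg _))
  have e5 : C 5 = 0 := mul_self_eq_zero.mp (le_antisymm
    (by linarith [mul_self_nonneg (C 1), mul_self_nonneg (C 2), mul_self_nonneg (C 3), mul_self_nonneg (C 4), mul_self_nonneg (C 6)])
    (mul_self_nonneg _))
  have e6 : C 6 = 0 := mul_self_eq_zero.mp (le_antisymm
    (by linarith [mul_self_nonneg (C 1), mul_self_nonneg (C 2), mul_self_nonneg (C 3), mul_self_nonneg (C 4), mul_self_nonneg (C 5)])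
    (mul_self_nonneg _))
  apply hC
  funext j
  fin_cases j
  · exact h0
  · exact e1
  · exact e2
  · exact e3
  · exact e4
  · exact e5
  · exact e6
end

section
/- Let T be a pairwise nonnegative subset of R = 𝒱″ ∪ 𝒧″ ∪ 𝒬″. Then the elements of T are linearly independent over ℚ (equivalently, over ℤ); in particular T has at most 6 elements. -/
/- ### Auxiliary development -/

abbrev W : Type := Fin 7 → ℚ
def ψ : V →ₗ[ℤ] W where
  toFun v := fun j => (v j : ℚ)
  map_add' x y := by ext j; push_cast; simp
  map_smul' c x := by ext j; push_cast; simp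

lemma ψ_apply (v : V) (j : Fin 7) : ψ v j = (v j : ℚ) := rfl

lemma ψ_inj : Function.Injective ψ := by
  intro x y h
  ext j
  have := congrFun h j
  rw [ψ_apply, ψ_apply] at this
  exact_mod_cast this

lemma Lv_zero : Lv 0 = 1 := rfl
lemma Lv_succ (k : Fin 6) : Lv k.succ = 0 := by
  simp [Lv, Fin.succ_ne_zero]
lemma Ev_zero (i : Fin 6) : Ev i 0 = 0 := by
  simp [Ev, (Fin.succ_ne_zero i).symm]
lemma Ev_succ (i k : Fin 6) : Ev i k.succ = if k = i then 1 else 0 := by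
  simp [Ev, Fin.succ_inj]

def Bq : W →ₗ[ℚ] W →ₗ[ℚ] ℚ :=
  LinearMap.mk₂ ℚ (fun x y => x 0 * y 0 - ∑ i : Fin 6, x i.succ * y i.succ)
    (by intro x x' y
        simp only [Pi.add_apply, add_mul, Finset.sum_add_distrib]
        ring)
    (by intro c x y
        simp only [Pi.smul_apply, smul_eq_mul, Finset.mul_sum, mul_sub, mul_assoc])
    (by intro x y y'
        simp only [Pi.add_apply, mul_add, Finset.sum_add_distrib]
        ring)
    (by intro c x y
        simp only [Pi.smul_apply, smul_eq_mul, Finset.mul_sum, mul_sub, mul_assoc,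
          mul_left_comm])
def κq : W →ₗ[ℚ] ℚ where
  toFun w := 3 * w 0 + ∑ i : Fin 6, w i.succ
  map_add' x y := by
    simp only [Pi.add_apply, mul_add, Finset.sum_add_distrib]
    ring
  map_smul' c x := by
    simp only [Pi.smul_apply, smul_eq_mul, Finset.mul_sum, mul_add, mul_assoc,
      mul_left_comm, RingHom.id_apply]
def fq : W →ₗ[ℚ] ℚ where
  toFun w := 16 * w 0 + ∑ i : Fin 6, (6 - (i : ℕ) : ℚ) * w i.succ
  map_add' x y := by
    simp only [Pi.add_apply, mul_add, Finset.sum_add_distrib]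
    ring
  map_smul' c x := by
    simp only [Pi.smul_apply, smul_eq_mul, Finset.mul_sum, mul_add, mul_assoc,
      mul_left_comm, RingHom.id_apply]

lemma Bq_apply (x y : W) : Bq x y = x 0 * y 0 - ∑ i : Fin 6, x i.succ * y i.succ := by simp only [Bq, LinearMap.mk₂_apply]

lemma κq_apply (w : W) : κq w = 3 * w 0 + ∑ i : Fin 6, w i.succ := rfl

set_option maxHeartbeats 1000000 in
lemma neg_def {w : W} (hκ : κq w = 0) (hB : 0 ≤ Bq w w) : w = 0 := by
  rw [κq_apply] at hκ
  rw [Bq_apply] at hB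
  rw [Fin.sum_univ_six] at hκ hB
  have e0 : (0 : Fin 6).succ = (1 : Fin 7) := rfl
  have e1 : (1 : Fin 6).succ = (2 : Fin 7) := rfl
  have e2 : (2 : Fin 6).succ = (3 : Fin 7) := rfl
  have e3 : (3 : Fin 6).succ = (4 : Fin 7) := rfl
  have e4 : (4 : Fin 6).succ = (5 : Fin 7) := rfl
  have e5 : (5 : Fin 6).succ = (6 : Fin 7) := rfl
  rw [e0, e1, e2, e3, e4, e5] at hκ hB
  have key : (w 1 + w 2 + w 3 + w 4 + w 5 + w 6) ^ 2
      ≤ 6 * (w 1 * w 1 + w 2 * w 2 + w 3 * w 3 + w 4 * w 4 + w 5 * w 5 + w 6 * w 6) := by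
    nlinarith [sq_nonneg (w 1 - w 2), sq_nonneg (w 1 - w 3), sq_nonneg (w 1 - w 4),
      sq_nonneg (w 1 - w 5), sq_nonneg (w 1 - w 6), sq_nonneg (w 2 - w 3),
      sq_nonneg (w 2 - w 4), sq_nonneg (w 2 - w 5), sq_nonneg (w 2 - w 6),
      sq_nonneg (w 3 - w 4), sq_nonneg (w 3 - w 5), sq_nonneg (w 3 - w 6),
      sq_nonneg (w 4 - w 5), sq_nonneg (w 4 - w 6), sq_nonneg (w 5 - w 6)]
  have hsum : w 1 + w 2 + w 3 + w 4 + w 5 + w 6 = -3 * w 0 := by linarith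
  rw [hsum] at key
  have h00 : w 0 ^ 2 = 0 := le_antisymm (by nlinarith) (sq_nonneg _)
  have ha : w 0 = 0 := (pow_eq_zero_iff two_ne_zero).mp h00
  have hsq : w 1 * w 1 + w 2 * w 2 + w 3 * w 3 + w 4 * w 4 + w 5 * w 5 + w 6 * w 6 ≤ 0 := by
    nlinarith
  have hz : ∀ x : ℚ, x ^ 2 ≤ 0 → x = 0 := fun x hx =>
    (pow_eq_zero_iff two_ne_zero).mp (le_antisymm hx (sq_nonneg _))
  have h1 : w 1 = 0 := hz _ (by nlinarith [sq_nonneg (w 2), sq_nonneg (w 3), sq_nonneg (w 4), sq_nonneg (w 5), sq_nonneg (w 6)])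
  have h2 : w 2 = 0 := hz _ (by nlinarith [sq_nonneg (w 1), sq_nonneg (w 3), sq_nonneg (w 4), sq_nonneg (w 5), sq_nonneg (w 6)])
  have h3 : w 3 = 0 := hz _ (by nlinarith [sq_nonneg (w 1), sq_nonneg (w 2), sq_nonneg (w 4), sq_nonneg (w 5), sq_nonneg (w 6)])
  have h4 : w 4 = 0 := hz _ (by nlinarith [sq_nonneg (w 1), sq_nonneg (w 2), sq_nonneg (w 3), sq_nonneg (w 5), sq_nonneg (w 6)])
  have h5 : w 5 = 0 := hz _ (by nlinarith [sq_nonneg (w 1), sq_nonneg (w 2), sq_nonneg (w 3), sq_nonneg (w 4), sq_nonneg (w 6)])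
  have h6 : w 6 = 0 := hz _ (by nlinarith [sq_nonneg (w 1), sq_nonneg (w 2), sq_nonneg (w 3), sq_nonneg (w 4), sq_nonneg (w 5)])
  funext j
  fin_cases j
  · exact ha
  · exact h1
  · exact h2
  · exact h3
  · exact h4
  · exact h5
  · exact h6


lemma Bq_psi (x y : V) : Bq (ψ x) (ψ y) = (form x y : ℚ) := by
  simp only [Bq, LinearMap.mk₂_apply, ψ_apply, form]
  push_cast
  ring

lemma κq_psi (v : V) : κq (ψ v) = ((3 * v 0 + ∑ i : Fin 6, v i.succ : ℤ) : ℚ) := by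
  show 3 * (ψ v) 0 + ∑ i : Fin 6, (ψ v) i.succ = _
  simp only [ψ_apply]
  push_cast
  ring

lemma fq_psi (v : V) :
    fq (ψ v) = ((16 * v 0 + ∑ i : Fin 6, (6 - (i : ℕ) : ℤ) * v i.succ : ℤ) : ℚ) := by
  show 16 * (ψ v) 0 + ∑ i : Fin 6, (6 - (i : ℕ) : ℚ) * (ψ v) i.succ = _
  simp only [ψ_apply]
  push_cast
  ring

lemma κq_vanish {C : V} (hC : C ∈ Rset) : κq (ψ C) = 0 := by
  rcases hC with (⟨i, j, hij, rfl⟩ | ⟨i, j, k, hij, hjk, rfl⟩) | rfl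
  · rw [κq_psi]
    simp [Pi.sub_apply, Ev_zero, Ev_succ, Finset.sum_sub_distrib, Finset.sum_ite_eq']
  · rw [κq_psi]
    simp [Pi.sub_apply, Ev_zero, Ev_succ, Lv_zero, Lv_succ, Finset.sum_sub_distrib,
      Finset.sum_ite_eq']
  · rw [κq_psi]
    simp [Pi.sub_apply, Pi.smul_apply, Finset.sum_apply, Ev_zero, Ev_succ, Lv_zero, Lv_succ,
      Finset.sum_sub_distrib, Finset.sum_ite_eq']

lemma fq_pos {C : V} (hC : C ∈ Rset) : 0 < fq (ψ C) := by
  rcases hC with (⟨i, j, hij, rfl⟩ | ⟨i, j, k, hij, hjk, rfl⟩) | rfl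
  · rw [fq_psi]
    have hij' : (i : ℕ) < (j : ℕ) := hij
    have : (16 * (Ev i - Ev j) 0 + ∑ k : Fin 6, (6 - (k : ℕ) : ℤ) * (Ev i - Ev j) k.succ)
        = (j : ℕ) - (i : ℕ) := by
      simp [Pi.sub_apply, Ev_zero, Ev_succ, mul_sub, Finset.sum_sub_distrib, mul_ite,
        Finset.sum_ite_eq']
      try push_cast
      try ring
    rw [this]
    have : (0:ℤ) < (j : ℕ) - (i : ℕ) := by omega
    exact_mod_cast this
  · rw [fq_psi]
    have h1 : (i : ℕ) < (j : ℕ) := hij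
    have h2 : (j : ℕ) < (k : ℕ) := hjk
    have : (16 * (Lv - Ev i - Ev j - Ev k) 0
          + ∑ m : Fin 6, (6 - (m : ℕ) : ℤ) * (Lv - Ev i - Ev j - Ev k) m.succ)
        = (i : ℕ) + (j : ℕ) + (k : ℕ) - 2 := by
      simp [Pi.sub_apply, Ev_zero, Ev_succ, Lv_zero, Lv_succ, mul_sub, Finset.sum_sub_distrib,
        mul_ite, Finset.sum_ite_eq']
      ring
    rw [this]
    have : (0:ℤ) < (i : ℕ) + (j : ℕ) + (k : ℕ) - 2 := by omega
    exact_mod_cast this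
  · rw [fq_psi]
    have : (16 * ((2:ℤ) • Lv - ∑ i : Fin 6, Ev i) 0
          + ∑ m : Fin 6, (6 - (m : ℕ) : ℤ) * ((2:ℤ) • Lv - ∑ i : Fin 6, Ev i) m.succ)
        = 11 := by
      simp [Pi.sub_apply, Pi.smul_apply, Finset.sum_apply, Ev_zero, Ev_succ, Lv_zero, Lv_succ,
        mul_sub, Finset.sum_sub_distrib, mul_ite, Finset.sum_ite_eq', Fin.sum_univ_six]
    rw [this]
    norm_num


lemma indepQ (T : Set V) (hTR : T ⊆ Rset) (hT : PairwiseNonneg T) :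
    LinearIndependent ℚ (fun t : T => ψ (t : V)) := by
  rw [linearIndependent_iff']
  intro s g hsum
  set P := s.filter (fun t => 0 < g t) with hP
  set N := s.filter (fun t => g t < 0) with hN
  set u := ∑ t ∈ P, g t • ψ (t : V) with hu
  have hsplit : u + ∑ t ∈ s.filter (fun t => ¬ 0 < g t), g t • ψ (t : V) = 0 := by
    rw [hu, Finset.sum_filter_add_sum_filter_not]
    exact hsum
  have hNsub : N ⊆ s.filter (fun t => ¬ 0 < g t) := by
    intro t ht
    rw [hN, Finset.mem_filter] at ht
    exact Finset.mem_filter.mpr ⟨ht.1, not_lt.mpr (le_of_lt ht.2)⟩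
  have hrest : ∑ t ∈ s.filter (fun t => ¬ 0 < g t), g t • ψ (t : V)
      = ∑ t ∈ N, g t • ψ (t : V) := by
    refine (Finset.sum_subset hNsub fun x hx hxN => ?_).symm
    have h1 : ¬ 0 < g x := (Finset.mem_filter.mp hx).2
    have h2 : ¬ g x < 0 := fun h => hxN (by
      rw [hN, Finset.mem_filter]; exact ⟨(Finset.mem_filter.mp hx).1, h⟩)
    rw [le_antisymm (not_lt.mp h1) (not_lt.mp h2), zero_smul]
  rw [hrest] at hsplit
  have huw : u = ∑ t ∈ N, (-(g t)) • ψ (t : V) := by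
    have h1 : u = - ∑ t ∈ N, g t • ψ (t : V) := eq_neg_of_add_eq_zero_left hsplit
    rw [h1, ← Finset.sum_neg_distrib]
    exact Finset.sum_congr rfl fun t _ => (neg_smul _ _).symm
  have hκu : κq u = 0 := by
    rw [hu, map_sum]
    exact Finset.sum_eq_zero fun t _ => by
      rw [map_smul, κq_vanish (hTR t.2), smul_zero]
  have hform : ∀ t r : T, t ∈ P → r ∈ N → 0 ≤ Bq (ψ (t : V)) (ψ (r : V)) := by
    intro t r ht hr
    have htr : (t : V) ≠ (r : V) := by
      intro h
      have : t = r := Subtype.ext h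
      subst this
      have h1 := (Finset.mem_filter.mp ht).2
      have h2 := (Finset.mem_filter.mp hr).2
      exact absurd h2 (not_lt.mpr (le_of_lt h1))
    rw [Bq_psi]
    exact_mod_cast hT (t : V) t.2 (r : V) r.2 htr
  have hBuu : 0 ≤ Bq u u := by
    have hexp : Bq u u = ∑ r ∈ N, ∑ t ∈ P, (g t * (-(g r))) * Bq (ψ (t : V)) (ψ (r : V)) := by
      calc Bq u u = Bq u (∑ r ∈ N, (-(g r)) • ψ (r : V)) := by rw [← huw]
        _ = ∑ r ∈ N, ∑ t ∈ P, (g t * (-(g r))) * Bq (ψ (t : V)) (ψ (r : V)) := by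
            rw [map_sum]
            refine Finset.sum_congr rfl fun r _ => ?_
            rw [map_smul, smul_eq_mul,
              show (Bq u) (ψ (r : V)) = (Bq.flip (ψ (r : V))) u from
                (LinearMap.flip_apply (f := Bq) u (ψ (r : V))).symm,
              hu, map_sum, Finset.mul_sum]
            refine Finset.sum_congr rfl fun t _ => ?_
            rw [map_smul, smul_eq_mul, LinearMap.flip_apply]
            ring
    rw [hexp]
    refine Finset.sum_nonneg fun r hr => Finset.sum_nonneg fun t ht => ?_
    have h1 : 0 < g t := (Finset.mem_filter.mp ht).2
    have h2 : g r < 0 := (Finset.mem_filter.mp hr).2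
    exact mul_nonneg (mul_nonneg (le_of_lt h1) (by linarith)) (hform t r ht hr)
  have hu0 : u = 0 := neg_def hκu hBuu
  have hPempty : ∀ t ∈ s, ¬ 0 < g t := by
    intro t hts hgt
    have htP : t ∈ P := Finset.mem_filter.mpr ⟨hts, hgt⟩
    have hpos : 0 < fq u := by
      rw [hu]
      rw [map_sum]
      refine Finset.sum_pos (fun r hr => ?_) ⟨t, htP⟩
      rw [map_smul, smul_eq_mul]
      exact mul_pos (Finset.mem_filter.mp hr).2 (fq_pos (hTR r.2))
    rw [hu0, map_zero] at hpos
    exact lt_irrefl 0 hpos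
  have hNempty : ∀ t ∈ s, ¬ g t < 0 := by
    intro t hts hgt
    have htN : t ∈ N := Finset.mem_filter.mpr ⟨hts, hgt⟩
    have hw0 : (∑ r ∈ N, (-(g r)) • ψ (r : V)) = 0 := by rw [← huw, hu0]
    have hpos : 0 < fq (∑ r ∈ N, (-(g r)) • ψ (r : V)) := by
      rw [map_sum]
      refine Finset.sum_pos (fun r hr => ?_) ⟨t, htN⟩
      rw [map_smul, smul_eq_mul]
      exact mul_pos (by linarith [(Finset.mem_filter.mp hr).2]) (fq_pos (hTR r.2))
    rw [hw0, map_zero] at hpos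
    exact lt_irrefl 0 hpos
  intro i hi
  exact le_antisymm (not_lt.mp (hPempty i hi)) (not_lt.mp (hNempty i hi))


/-- the elements of a pairwise nonnegative subset of `R` are linearly
independent; in particular such a subset has at most 6 elements. -/
theorem pairwiseNonneg_linearIndependent (T : Set V) (hTR : T ⊆ Rset)
    (hT : PairwiseNonneg T) :
    LinearIndependent ℤ (fun t : T => (t : V)) ∧ T.ncard ≤ 6 := by
  have hQ := indepQ T hTR hT
  constructor
  · have hZ : LinearIndependent ℤ (fun t : T => ψ (t : V)) := by
      refine hQ.restrict_scalars ?_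
      intro a b h
      simpa using h
    exact LinearIndependent.of_comp ψ hZ
  · set Kker := LinearMap.ker κq with hK
    have hmem : ∀ t : T, ψ (t : V) ∈ Kker := fun t => LinearMap.mem_ker.mpr (κq_vanish (hTR t.2))
    have hv' : LinearIndependent ℚ (fun t : T => (⟨ψ (t : V), hmem t⟩ : Kker)) := by
      apply LinearIndependent.of_comp Kker.subtype
      exact hQ
    have hr : LinearMap.range κq = ⊤ := by
      rw [LinearMap.range_eq_top]
      intro q
      refine ⟨fun j => if j = 1 then q else 0, ?_⟩
      rw [κq_apply, Fin.sum_univ_six]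
      rw [if_neg (by decide : ¬((0 : Fin 7) = 1)),
        if_pos (by decide : Fin.succ (0 : Fin 6) = (1 : Fin 7)),
        if_neg (by decide : ¬(Fin.succ (1 : Fin 6) = (1 : Fin 7))),
        if_neg (by decide : ¬(Fin.succ (2 : Fin 6) = (1 : Fin 7))),
        if_neg (by decide : ¬(Fin.succ (3 : Fin 6) = (1 : Fin 7))),
        if_neg (by decide : ¬(Fin.succ (4 : Fin 6) = (1 : Fin 7))),
        if_neg (by decide : ¬(Fin.succ (5 : Fin 6) = (1 : Fin 7)))]
      ring
    have h7 : Module.finrank ℚ W = 7 := by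
      simp [Module.finrank_pi]
    have hrk := LinearMap.finrank_range_add_finrank_ker κq
    rw [hr, finrank_top, Module.finrank_self, h7] at hrk
    rw [← hK] at hrk
    have hker : Module.finrank ℚ Kker = 6 := by omega
    haveI : Finite ↥T := hv'.finite
    have hTfin : T.Finite := Set.toFinite T
    haveI := hTfin.fintype
    have hcard : Fintype.card ↥T ≤ Module.finrank ℚ Kker := hv'.fintype_card_le_finrank
    rw [hker] at hcard
    calc T.ncard = Nat.card ↥T := (Nat.card_coe_set_eq T).symm
      _ = Fintype.card ↥T := Nat.card_eq_fintype_card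
      _ ≤ 6 := hcard
end

section
/- Let T be a pairwise nonnegative subset of R = 𝒱″ ∪ 𝒧″ ∪ 𝒬″, and let D be an element of the subgroup of V generated by T with ⟨D,D⟩ = −2. Then either D or −D is a linear combination of elements of T with nonnegative integer coefficients. -/
lemma form_add_left (x y z : V) : form (x + y) z = form x z + form y z := by
  simp only [form, Pi.add_apply, add_mul, Finset.sum_add_distrib]; ring

lemma form_smul_left (a : ℤ) (x z : V) : form (a • x) z = a * form x z := by
  simp only [form, Pi.smul_apply, smul_eq_mul, mul_assoc, ← Finset.mul_sum]; ring

lemma form_comm (x y : V) : form x y = form y x := by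
  simp only [form, mul_comm]

def B : V →ₗ[ℤ] V →ₗ[ℤ] ℤ :=
  LinearMap.mk₂ ℤ form form_add_left form_smul_left
    (fun x y z => by rw [form_comm, form_add_left, form_comm x y, form_comm x z])
    (fun a x y => by rw [form_comm, form_smul_left, form_comm]; rfl)

lemma form_eq_B (x y : V) : form x y = B x y := rfl

lemma form_sub_left (x y z : V) : form (x - y) z = form x z - form y z := by
  show B (x - y) z = B x z - B y z
  rw [map_sub, LinearMap.sub_apply]

lemma form_sub_right (x y z : V) : form x (y - z) = form x y - form x z := by
  rw [form_comm, form_sub_left, form_comm y x, form_comm z x]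

lemma form_sum_left {ι : Type*} (s : Finset ι) (f : ι → V) (z : V) :
    form (∑ i ∈ s, f i) z = ∑ i ∈ s, form (f i) z := by
  show B (∑ i ∈ s, f i) z = _
  rw [map_sum, LinearMap.sum_apply]
  rfl

lemma Kv_zero : Kv 0 = -3 := by
  simp [Kv, Lv, Ev, Finset.sum_apply, (Fin.succ_ne_zero _).symm]

lemma Kv_succ (i : Fin 6) : Kv i.succ = 1 := by
  simp [Kv, Lv, Ev, Finset.sum_apply, Fin.succ_ne_zero, Fin.succ_inj]

lemma form_Kv (v : V) : form v Kv = -3 * v 0 - ∑ i : Fin 6, v i.succ := by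
  simp [form, Kv_zero, Kv_succ]; ring

lemma form_Lv_Kv : form Lv Kv = -3 := by simp [form_Kv, Lv, Fin.succ_ne_zero]

lemma form_Ev_Kv (i : Fin 6) : form (Ev i) Kv = -1 := by
  simp [form_Kv, Ev, (Fin.succ_ne_zero i).symm, Fin.succ_inj]

lemma form_R_Kv : ∀ r ∈ Rset, form r Kv = 0 := by
  rintro r ((⟨i, j, hij, rfl⟩ | ⟨i, j, k, hij, hjk, rfl⟩) | (rfl : _ = _))
  · rw [form_sub_left, form_Ev_Kv, form_Ev_Kv]; ring
  · rw [form_sub_left, form_sub_left, form_sub_left, form_Lv_Kv,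
      form_Ev_Kv, form_Ev_Kv, form_Ev_Kv]; ring
  · rw [form_sub_left, form_smul_left, form_sum_left, form_Lv_Kv]
    simp [form_Ev_Kv]

lemma even_sq_sub (n : ℤ) : Even (n ^ 2 - n) := by
  have h := Int.even_mul_succ_self (n - 1)
  have e : (n - 1) * (n - 1 + 1) = n ^ 2 - n := by ring
  rwa [e] at h

set_option maxHeartbeats 1600000 in
lemma aux_arith (a b0 b1 b2 b3 b4 b5 F : ℤ)
    (hsum : b0 + b1 + b2 + b3 + b4 + b5 = -3 * a)
    (hF : F = a ^ 2 - (b0 ^ 2 + b1 ^ 2 + b2 ^ 2 + b3 ^ 2 + b4 ^ 2 + b5 ^ 2))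
    (hne : ¬(a = 0 ∧ b0 = 0 ∧ b1 = 0 ∧ b2 = 0 ∧ b3 = 0 ∧ b4 = 0 ∧ b5 = 0)) :
    F ≤ -2 := by
  by_contra h
  push_neg at h
  have heven : Even F := by
    have e : F = (a ^ 2 - a) - ((b0 ^ 2 - b0) + (b1 ^ 2 - b1) + (b2 ^ 2 - b2)
        + (b3 ^ 2 - b3) + (b4 ^ 2 - b4) + (b5 ^ 2 - b5)) + 4 * a := by
      rw [hF]; linarith
    rw [e]
    exact (((even_sq_sub a).sub ((((((even_sq_sub b0).add (even_sq_sub b1)).add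
      (even_sq_sub b2)).add (even_sq_sub b3)).add (even_sq_sub b4)).add
      (even_sq_sub b5)))).add ⟨2 * a, by ring⟩
  have hq : (b0 + b1 + b2 + b3 + b4 + b5) ^ 2
      ≤ 6 * (b0 ^ 2 + b1 ^ 2 + b2 ^ 2 + b3 ^ 2 + b4 ^ 2 + b5 ^ 2) := by
    nlinarith [sq_nonneg (b0 - b1), sq_nonneg (b0 - b2), sq_nonneg (b0 - b3),
      sq_nonneg (b0 - b4), sq_nonneg (b0 - b5), sq_nonneg (b1 - b2),
      sq_nonneg (b1 - b3), sq_nonneg (b1 - b4), sq_nonneg (b1 - b5),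
      sq_nonneg (b2 - b3), sq_nonneg (b2 - b4), sq_nonneg (b2 - b5),
      sq_nonneg (b3 - b4), sq_nonneg (b3 - b5), sq_nonneg (b4 - b5)]
  rw [hsum] at hq
  ring_nf at hq
  have h6 : 6 * F ≤ -3 * a ^ 2 := by rw [hF]; linarith
  have hF0 : F = 0 := by
    rcases heven with ⟨k, hk⟩
    have : 0 ≤ a ^ 2 := sq_nonneg a
    omega
  have ha0 : a = 0 := by nlinarith
  refine hne ⟨ha0, ?_, ?_, ?_, ?_, ?_, ?_⟩ <;>
    nlinarith [sq_nonneg b0, sq_nonneg b1, sq_nonneg b2, sq_nonneg b3,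
      sq_nonneg b4, sq_nonneg b5]

lemma norm_le_neg_two (v : V) (hK : form v Kv = 0) (hv : v ≠ 0) : form v v ≤ -2 := by
  rw [form_Kv, Fin.sum_univ_six] at hK
  refine aux_arith (v 0) (v (Fin.succ 0)) (v (Fin.succ 1)) (v (Fin.succ 2)) (v (Fin.succ 3))
    (v (Fin.succ 4)) (v (Fin.succ 5)) (form v v) (by linarith) ?_ ?_
  · rw [form, Fin.sum_univ_six]; ring
  · rintro ⟨h0, h1, h2, h3, h4, h5, h6⟩
    apply hv
    funext j
    refine Fin.cases h0 ?_ j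
    intro i
    fin_cases i
    exacts [h1, h2, h3, h4, h5, h6]

/-- if `D` lies in the subgroup generated by a pairwise nonnegative subset
`T ⊆ R` and `⟨D,D⟩ = −2`, then `D` or `−D` is a nonnegative integer combination of
elements of `T` (i.e. lies in the additive submonoid generated by `T`). -/
theorem pm_nonneg_combination (T : Set V) (hTR : T ⊆ Rset) (hT : PairwiseNonneg T)
    (D : V) (hD : D ∈ AddSubgroup.closure T) (hDD : form D D = -2) :
    D ∈ AddSubmonoid.closure T ∨ -D ∈ AddSubmonoid.closure T := by
  classical
  have hTK : ∀ t ∈ T, form t Kv = 0 := fun t ht => form_R_Kv t (hTR ht)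
  have hDspan : D ∈ Submodule.span ℤ T :=
    (AddSubgroup.closure_le ((Submodule.span ℤ T).toAddSubgroup)).mpr Submodule.subset_span hD
  obtain ⟨c, hsupp, hsum⟩ := Submodule.mem_span_set.mp hDspan
  set P : V := ∑ v ∈ c.support, ((c v).toNat : ℤ) • v with hP
  set N : V := ∑ v ∈ c.support, (((-c v).toNat : ℤ)) • v with hN
  have hDPN : D = P - N := by
    rw [← hsum, Finsupp.sum, hP, hN, ← Finset.sum_sub_distrib]
    refine Finset.sum_congr rfl fun v _ => ?_
    rw [← sub_smul]
    congr 1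
    omega
  have hMem : ∀ (f : V → ℤ), (∀ v, 0 ≤ f v) →
      (∑ v ∈ c.support, f v • v) ∈ AddSubmonoid.closure T := by
    intro f hf
    refine AddSubmonoid.sum_mem _ fun v hv => ?_
    have h1 : v ∈ T := hsupp hv
    have hfv := hf v
    have h2 : f v • v = (f v).toNat • v := by
      rw [← natCast_zsmul]
      congr 1
      omega
    rw [h2]
    exact nsmul_mem (AddSubmonoid.subset_closure h1) _
  have hPT : P ∈ AddSubmonoid.closure T := hMem _ (fun v => Int.natCast_nonneg _)
  have hNT : N ∈ AddSubmonoid.closure T := hMem _ (fun v => Int.natCast_nonneg _)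
  have hform : ∀ (f g : V → ℤ),
      form (∑ v ∈ c.support, f v • v) (∑ w ∈ c.support, g w • w)
        = ∑ v ∈ c.support, ∑ w ∈ c.support, f v * (g w * form v w) := by
    intro f g
    rw [form_sum_left]
    refine Finset.sum_congr rfl fun v _ => ?_
    rw [form_smul_left, form_comm, form_sum_left, Finset.mul_sum]
    refine Finset.sum_congr rfl fun w _ => ?_
    rw [form_smul_left, form_comm]
  have hPN : 0 ≤ form P N := by
    rw [hP, hN, hform]
    refine Finset.sum_nonneg fun v hv => Finset.sum_nonneg fun w hw => ?_
    by_cases hvw : v = w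
    · subst hvw
      have : (c v).toNat = 0 ∨ (-c v).toNat = 0 := by omega
      rcases this with h | h <;> simp [h]
    · exact mul_nonneg (Int.natCast_nonneg _)
        (mul_nonneg (Int.natCast_nonneg _) (hT v (hsupp hv) w (hsupp hw) hvw))
  have hKzero : ∀ (f : V → ℤ), form (∑ v ∈ c.support, f v • v) Kv = 0 := by
    intro f
    rw [form_sum_left]
    refine Finset.sum_eq_zero fun v hv => ?_
    rw [form_smul_left, hTK v (hsupp hv), mul_zero]
  have hexp : form D D = form P P - 2 * form P N + form N N := by
    rw [hDPN, form_sub_left, form_sub_right, form_sub_right, form_comm N P]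
    ring
  by_cases hP0 : P = 0
  · right
    have : -D = N := by rw [hDPN, hP0, zero_sub, neg_neg]
    rwa [this]
  by_cases hN0 : N = 0
  · left
    rw [hDPN, hN0, sub_zero]
    exact hPT
  · exfalso
    have h1 : form P P ≤ -2 := norm_le_neg_two P (by rw [hP]; exact hKzero _) hP0
    have h2 : form N N ≤ -2 := norm_le_neg_two N (by rw [hN]; exact hKzero _) hN0
    rw [hDD] at hexp
    linarith
end

section
/- Let T = {E₁ − E₂, E₂ − E₃, E₄ − E₅, E₅ − E₆, L − E₁ − E₂ − E₃, L − E₄ − E₅ − E₆} (the configuration type 3A₂a). Then the torsion subgroup of V/⟨T⟩, where ⟨T⟩ is the subgroup of V generated by T, is isomorphic to ℤ/3ℤ. -/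
lemma succ0 : (0 : Fin 6).succ = (1 : Fin 7) := rfl
lemma succ1 : (1 : Fin 6).succ = (2 : Fin 7) := rfl
lemma succ2 : (2 : Fin 6).succ = (3 : Fin 7) := rfl
lemma succ3 : (3 : Fin 6).succ = (4 : Fin 7) := rfl
lemma succ4 : (4 : Fin 6).succ = (5 : Fin 7) := rfl
lemma succ5 : (5 : Fin 6).succ = (6 : Fin 7) := rfl

def phi : V →+ ℤ × ZMod 3 where
  toFun x := (3 * x 0 + x 1 + x 2 + x 3 + x 4 + x 5 + x 6,
    ((x 1 + x 2 + x 3 : ℤ) : ZMod 3))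
  map_zero' := by simp
  map_add' x y := by
    simp only [Pi.add_apply, Prod.mk_add_mk, Prod.mk.injEq]
    exact ⟨by ring, by push_cast; ring⟩

lemma ker_phi : phi.ker = AddSubgroup.closure ({Ev 0 - Ev 1, Ev 1 - Ev 2, Ev 3 - Ev 4,
    Ev 4 - Ev 5, Lv - Ev 0 - Ev 1 - Ev 2, Lv - Ev 3 - Ev 4 - Ev 5} : Set V) := by
  apply le_antisymm
  · intro x hx
    rw [AddMonoidHom.mem_ker, Prod.ext_iff] at hx
    obtain ⟨h1, h2⟩ := hx
    simp only [phi, AddMonoidHom.coe_mk, ZeroHom.coe_mk, Prod.fst_zero, Prod.snd_zero] at h1 h2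
    have h3 : (3 : ℤ) ∣ x 1 + x 2 + x 3 := by
      rwa [ZMod.intCast_zmod_eq_zero_iff_dvd] at h2
    obtain ⟨s, hs⟩ := h3
    set N := AddSubgroup.closure ({Ev 0 - Ev 1, Ev 1 - Ev 2, Ev 3 - Ev 4,
      Ev 4 - Ev 5, Lv - Ev 0 - Ev 1 - Ev 2, Lv - Ev 3 - Ev 4 - Ev 5} : Set V)
    have m1 : Ev 0 - Ev 1 ∈ N := AddSubgroup.subset_closure (by simp)
    have m2 : Ev 1 - Ev 2 ∈ N := AddSubgroup.subset_closure (by simp)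
    have m3 : Ev 3 - Ev 4 ∈ N := AddSubgroup.subset_closure (by simp)
    have m4 : Ev 4 - Ev 5 ∈ N := AddSubgroup.subset_closure (by simp)
    have m5 : Lv - Ev 0 - Ev 1 - Ev 2 ∈ N := AddSubgroup.subset_closure (by simp)
    have m6 : Lv - Ev 3 - Ev 4 - Ev 5 ∈ N := AddSubgroup.subset_closure (by simp)
    have hxeq : x = (x 1 - s) • (Ev 0 - Ev 1) + (x 1 + x 2 - 2*s) • (Ev 1 - Ev 2)
        + (x 4 + x 0 + s) • (Ev 3 - Ev 4) + (x 4 + x 5 + 2*x 0 + 2*s) • (Ev 4 - Ev 5)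
        + (-s) • (Lv - Ev 0 - Ev 1 - Ev 2) + (x 0 + s) • (Lv - Ev 3 - Ev 4 - Ev 5) := by
      funext j
      fin_cases j <;>
        simp [Ev, Lv, succ0, succ1, succ2, succ3, succ4, succ5, smul_eq_mul] <;> omega
    rw [hxeq]
    exact AddSubgroup.add_mem _ (AddSubgroup.add_mem _ (AddSubgroup.add_mem _
      (AddSubgroup.add_mem _ (AddSubgroup.add_mem _ (AddSubgroup.zsmul_mem _ m1 _)
      (AddSubgroup.zsmul_mem _ m2 _)) (AddSubgroup.zsmul_mem _ m3 _))
      (AddSubgroup.zsmul_mem _ m4 _)) (AddSubgroup.zsmul_mem _ m5 _))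
      (AddSubgroup.zsmul_mem _ m6 _)
  · rw [AddSubgroup.closure_le]
    intro v hv
    simp only [Set.mem_insert_iff, Set.mem_singleton_iff] at hv
    rcases hv with rfl | rfl | rfl | rfl | rfl | rfl <;>
      · show phi _ = 0
        simp [phi, Ev, Lv, succ0, succ1, succ2, succ3, succ4, succ5] <;> decide

lemma phi_surj : Function.Surjective phi := by
  intro ⟨n, z⟩
  refine ⟨fun j => if j = 1 then (z.val : ℤ) else if j = 4 then n - z.val else 0, ?_⟩
  show (_, _) = (n, z)
  rw [Prod.ext_iff]
  constructor
  · simp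
  · simp [ZMod.natCast_val, ZMod.intCast_cast, ZMod.cast_id]


/-- for the configuration type `3A₂a`,
`T = {E₁−E₂, E₂−E₃, E₄−E₅, E₅−E₆, L−E₁−E₂−E₃, L−E₄−E₅−E₆}`, the torsion subgroup of
`V/⟨T⟩` is isomorphic to `ℤ/3ℤ`. -/
theorem torsion_3A2a :
    Nonempty ((AddCommGroup.torsion
      (V ⧸ AddSubgroup.closure ({Ev 0 - Ev 1, Ev 1 - Ev 2, Ev 3 - Ev 4, Ev 4 - Ev 5,
        Lv - Ev 0 - Ev 1 - Ev 2, Lv - Ev 3 - Ev 4 - Ev 5} : Set V))) ≃+ ZMod 3) := by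
  rw [← ker_phi]
  set Q := V ⧸ phi.ker
  let e : Q ≃+ ℤ × ZMod 3 := QuotientAddGroup.quotientKerEquivOfSurjective phi phi_surj
  -- the hom from torsion to ZMod 3
  let ψ : AddCommGroup.torsion Q →+ ZMod 3 :=
    ((AddMonoidHom.snd ℤ (ZMod 3)).comp e.toAddMonoidHom).comp
      (AddCommGroup.torsion Q).subtype
  have hinj : Function.Injective ψ := by
    intro a b hab
    have ha : IsOfFinAddOrder (a : Q) := a.2
    have hb : IsOfFinAddOrder (b : Q) := b.2
    have hfst : ∀ c : AddCommGroup.torsion Q, (e (c : Q)).1 = 0 := by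
      intro c
      have hc : IsOfFinAddOrder (e (c : Q)) := by
        obtain ⟨n, hn, h⟩ := isOfFinAddOrder_iff_nsmul_eq_zero.mp c.2
        exact isOfFinAddOrder_iff_nsmul_eq_zero.mpr ⟨n, hn, by rw [← map_nsmul, h, map_zero]⟩
      obtain ⟨n, hn, h⟩ := isOfFinAddOrder_iff_nsmul_eq_zero.mp hc
      have : n • (e (c : Q)).1 = 0 := by
        have := congrArg Prod.fst h
        simpa using this
      have hn' : (n : ℤ) ≠ 0 := by exact_mod_cast hn.ne'
      simpa [smul_eq_mul] using (by
        have : (n : ℤ) * (e (c : Q)).1 = 0 := by simpa [nsmul_eq_mul] using this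
        exact (mul_eq_zero.mp this).resolve_left hn')
    have hsnd : (e (a : Q)).2 = (e (b : Q)).2 := hab
    have : e (a : Q) = e (b : Q) := Prod.ext (by rw [hfst a, hfst b]) hsnd
    exact Subtype.ext (e.injective this)
  have hsurj : Function.Surjective ψ := by
    intro z
    have hmem : e.symm (0, z) ∈ AddCommGroup.torsion Q := by
      refine isOfFinAddOrder_iff_nsmul_eq_zero.mpr ⟨3, by norm_num, ?_⟩
      have : (3 : ℕ) • ((0 : ℤ), z) = 0 := by
        ext
        · simp
        · show (3 : ℕ) • z = 0
          have : (3 : ℕ) • z = (3 : ZMod 3) * z := by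
            push_cast [nsmul_eq_mul]; ring
          rw [this]
          simp [show ((3 : ZMod 3)) = 0 from rfl]
      rw [← map_nsmul, this, map_zero]
    refine ⟨⟨e.symm (0, z), hmem⟩, ?_⟩
    show (e (e.symm (0, z))).2 = z
    rw [e.apply_symm_apply]
  exact ⟨AddEquiv.ofBijective ψ ⟨hinj, hsurj⟩⟩
end

section
/- Let T = {L − E₁ − E₂ − E₃, L − E₁ − E₄ − E₅, L − E₂ − E₄ − E₆, L − E₃ − E₅ − E₆} (the configuration type 4A₁c). Then the torsion subgroup of V/⟨T⟩, where ⟨T⟩ is the subgroup of V generated by T, is isomorphic to ℤ/2ℤ. -/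
def Tset : Set V := {Lv - Ev 0 - Ev 1 - Ev 2, Lv - Ev 0 - Ev 3 - Ev 4,
  Lv - Ev 1 - Ev 3 - Ev 5, Lv - Ev 2 - Ev 4 - Ev 5}

def f0 : V → (Fin 3 → ℤ) × ZMod 2 := fun x =>
  (![x 0 + x 3 + x 4, x 0 + x 2 + x 5, x 0 + x 1 + x 6],
   ((-(x 0) - x 1 - x 2 + x 3 : ℤ) : ZMod 2))

def fhom : V →+ (Fin 3 → ℤ) × ZMod 2 :=
  AddMonoidHom.mk' f0 (by
    intro a b
    unfold f0
    refine Prod.ext ?_ ?_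
    · funext i
      fin_cases i <;> simp [Pi.add_apply] <;> ring
    · simp only [Pi.add_apply, Prod.snd_add]
      push_cast
      ring)

lemma ker_eq : fhom.ker = AddSubgroup.closure Tset := by
  apply le_antisymm
  · intro x hx
    rw [AddMonoidHom.mem_ker] at hx
    have h1 : x 0 + x 3 + x 4 = 0 := by
      have := congrFun (congrArg Prod.fst hx) 0
      simpa [fhom, f0] using this
    have h2 : x 0 + x 2 + x 5 = 0 := by
      have := congrFun (congrArg Prod.fst hx) 1
      simpa [fhom, f0] using this
    have h3 : x 0 + x 1 + x 6 = 0 := by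
      have := congrFun (congrArg Prod.fst hx) 2
      simpa [fhom, f0] using this
    have h4 : ((-(x 0) - x 1 - x 2 + x 3 : ℤ) : ZMod 2) = 0 := congrArg Prod.snd hx
    have hdvd : (2 : ℤ) ∣ (-(x 0) - x 1 - x 2 + x 3) := by
      have := (ZMod.intCast_zmod_eq_zero_iff_dvd _ 2).1 h4
      exact_mod_cast this
    obtain ⟨m, hm⟩ := hdvd
    have hx' : x = (-(x 0) - x 1 - x 2 - m) • (Lv - Ev 0 - Ev 1 - Ev 2)
        + (x 0 + x 2 + m) • (Lv - Ev 0 - Ev 3 - Ev 4)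
        + (x 0 + x 1 + m) • (Lv - Ev 1 - Ev 3 - Ev 5)
        + (-m) • (Lv - Ev 2 - Ev 4 - Ev 5) := by
      funext j
      fin_cases j <;>
        simp (config := { decide := true }) [Lv, Ev, Pi.add_apply, Pi.sub_apply,
          Pi.smul_apply, smul_eq_mul] <;>
        linarith
    rw [hx']
    have m1 : Lv - Ev 0 - Ev 1 - Ev 2 ∈ AddSubgroup.closure Tset :=
      AddSubgroup.subset_closure (by simp [Tset])
    have m2 : Lv - Ev 0 - Ev 3 - Ev 4 ∈ AddSubgroup.closure Tset :=
      AddSubgroup.subset_closure (by simp [Tset])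
    have m3 : Lv - Ev 1 - Ev 3 - Ev 5 ∈ AddSubgroup.closure Tset :=
      AddSubgroup.subset_closure (by simp [Tset])
    have m4 : Lv - Ev 2 - Ev 4 - Ev 5 ∈ AddSubgroup.closure Tset :=
      AddSubgroup.subset_closure (by simp [Tset])
    exact add_mem (add_mem (add_mem (AddSubgroup.zsmul_mem _ m1 _)
      (AddSubgroup.zsmul_mem _ m2 _)) (AddSubgroup.zsmul_mem _ m3 _))
      (AddSubgroup.zsmul_mem _ m4 _)
  · rw [AddSubgroup.closure_le]
    intro v hv
    rcases hv with h | h | h | h <;> subst h <;> (show f0 _ = 0; decide)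

lemma fsurj : Function.Surjective fhom := by
  rintro ⟨a, b⟩
  refine ⟨fun j => if j = 3 then (b.val : ℤ) else if j = 4 then a 0 - b.val
    else if j = 5 then a 1 else if j = 6 then a 2 else 0, ?_⟩
  refine Prod.ext ?_ ?_
  · funext i
    fin_cases i <;>
      simp (config := { decide := true }) [fhom, f0] <;> ring
  · show ((-(0 : ℤ) - 0 - 0 + (b.val : ℤ) : ℤ) : ZMod 2) = b
    push_cast
    simp

noncomputable def eqv : (V ⧸ AddSubgroup.closure Tset) ≃+ (Fin 3 → ℤ) × ZMod 2 :=
  (QuotientAddGroup.quotientAddEquivOfEq ker_eq.symm).trans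
    (QuotientAddGroup.quotientKerEquivOfSurjective fhom fsurj)

noncomputable def finalEquiv :
    (AddCommGroup.torsion (V ⧸ AddSubgroup.closure Tset)) ≃+ ZMod 2 := by
  refine AddEquiv.ofBijective
    (((AddMonoidHom.snd (Fin 3 → ℤ) (ZMod 2)).comp eqv.toAddMonoidHom).comp
      (AddCommGroup.torsion (V ⧸ AddSubgroup.closure Tset)).subtype) ⟨?_, ?_⟩
  · rw [injective_iff_map_eq_zero]
    intro g hg
    obtain ⟨n, hn, hnx⟩ := isOfFinAddOrder_iff_nsmul_eq_zero.1 g.2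
    have hmap : n • (eqv g.1) = 0 := by rw [← map_nsmul, hnx, map_zero]
    have hne : (n : ℤ) ≠ 0 := Int.natCast_ne_zero.2 hn.ne'
    have hfst : (eqv g.1).1 = 0 := by
      have h := congrArg Prod.fst hmap
      rw [Prod.smul_fst] at h
      funext i
      have hi := congrFun h i
      rw [Pi.smul_apply, nsmul_eq_mul] at hi
      have hi0 : (n : ℤ) * (eqv g.1).1 i = 0 := by simpa using hi
      rcases mul_eq_zero.1 hi0 with h' | h'
      · exact absurd h' hne
      · simpa using h'
    have hsnd : (eqv g.1).2 = 0 := hg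
    have : eqv g.1 = 0 := Prod.ext hfst hsnd
    have : g.1 = 0 := by
      have := congrArg eqv.symm this
      simpa using this
    exact Subtype.ext this
  · intro c
    have h2 : (2 : ℕ) • ((0, c) : (Fin 3 → ℤ) × ZMod 2) = 0 := by
      refine Prod.ext (by simp) ?_
      show (2 : ℕ) • c = 0
      rw [nsmul_eq_mul]
      rw [show ((2 : ℕ) : ZMod 2) = 0 from by decide, zero_mul]
    refine ⟨⟨eqv.symm (0, c), ?_⟩, ?_⟩
    · refine isOfFinAddOrder_iff_nsmul_eq_zero.2 ⟨2, two_pos, ?_⟩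
      rw [← map_nsmul, h2, map_zero]
    · show (eqv (eqv.symm (0, c))).2 = c
      rw [AddEquiv.apply_symm_apply]


/-- for the configuration type `4A₁c`,
`T = {L−E₁−E₂−E₃, L−E₁−E₄−E₅, L−E₂−E₄−E₆, L−E₃−E₅−E₆}`, the torsion subgroup of
`V/⟨T⟩` is isomorphic to `ℤ/2ℤ`. -/
theorem torsion_4A1c :
    Nonempty ((AddCommGroup.torsion
      (V ⧸ AddSubgroup.closure ({Lv - Ev 0 - Ev 1 - Ev 2, Lv - Ev 0 - Ev 3 - Ev 4,
        Lv - Ev 1 - Ev 3 - Ev 5, Lv - Ev 2 - Ev 4 - Ev 5} : Set V))) ≃+ ZMod 2) := ⟨finalEquiv⟩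
end

section
/- Let T = {E₁ − E₂, E₂ − E₃, E₃ − E₄, E₄ − E₅, E₅ − E₆, L − E₁ − E₂ − E₃} (the configuration type E₆). Then the subgroup ⟨T⟩ of V generated by T is exactly the orthogonal complement K^⊥ = {C ∈ V : ⟨C,K⟩ = 0}, and the quotient group V/⟨T⟩ is isomorphic to ℤ; in particular the torsion subgroup Tors_T is trivial. -/
/-! The six classes of the configuration form a `ℤ`-basis of `K^⊥`: a class `C` with
`⟨C, K⟩ = 0` is the combination of them whose coefficients are partial sums of its coordinates.
So `⟨T⟩` is the kernel of `C ↦ ⟨C, K⟩`, which is onto `ℤ` since `⟨E₁, K⟩ = -1`; hence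
`V/⟨T⟩ ≅ ℤ`, and `ℤ` is torsion-free. -/

theorem subsingleton_torsion_of_addEquiv {G H : Type*} [AddCommGroup G] [AddCommGroup H]
    [IsAddTorsionFree H] (e : G ≃+ H) : Subsingleton (AddCommGroup.torsion G) := by
  have := Function.Injective.isAddTorsionFree e.toAddMonoidHom e.injective
  rw [AddCommGroup.isAddTorsionFree_iff_torsion_eq_bot] at this
  rw [this]
  infer_instance

def formRight (y : V) : V →+ ℤ where
  toFun x := form x y
  map_zero' := by simp [form]
  map_add' x x' := by simp [form, add_mul, Finset.sum_add_distrib]; ring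

lemma form_Kv_s13 (C : V) : form C Kv = -3 * C 0 - (C 1 + C 2 + C 3 + C 4 + C 5 + C 6) := by
  simp [form, Kv, Lv, Ev, Fin.sum_univ_six, Fin.succ_ne_zero, mul_comm]

def typeE6 : Set V :=
  {Ev 0 - Ev 1, Ev 1 - Ev 2, Ev 2 - Ev 3, Ev 3 - Ev 4, Ev 4 - Ev 5, Lv - Ev 0 - Ev 1 - Ev 2}

lemma closure_typeE6_le_ker : AddSubgroup.closure typeE6 ≤ (formRight Kv).ker := by
  rw [AddSubgroup.closure_le]
  simp only [typeE6, Set.insert_subset_iff, Set.singleton_subset_iff]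
  simp [formRight, form_Kv_s13, Ev, Lv]

lemma mem_closure_typeE6_of_form_Kv_eq_zero {C : V} (hC : form C Kv = 0) :
    C ∈ AddSubgroup.closure typeE6 := by
  rw [form_Kv_s13] at hC
  -- The coordinates `L, E₁, …, E₅` force the coefficients; `E₆` then matches by `hC`.
  have hrep : C = (C 0 + C 1) • (Ev 0 - Ev 1) + (2 * C 0 + C 1 + C 2) • (Ev 1 - Ev 2)
      + (3 * C 0 + C 1 + C 2 + C 3) • (Ev 2 - Ev 3)
      + (3 * C 0 + C 1 + C 2 + C 3 + C 4) • (Ev 3 - Ev 4)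
      + (3 * C 0 + C 1 + C 2 + C 3 + C 4 + C 5) • (Ev 4 - Ev 5)
      + C 0 • (Lv - Ev 0 - Ev 1 - Ev 2) := by
    funext j
    fin_cases j <;> simp [Ev, Lv] <;> linarith
  rw [hrep]
  refine add_mem (add_mem (add_mem (add_mem (add_mem ?_ ?_) ?_) ?_) ?_) ?_ <;>
    exact zsmul_mem (AddSubgroup.subset_closure (by simp [typeE6])) _

lemma closure_typeE6_eq_ker : AddSubgroup.closure typeE6 = (formRight Kv).ker :=
  le_antisymm closure_typeE6_le_ker fun _ ↦ mem_closure_typeE6_of_form_Kv_eq_zero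

lemma formRight_Kv_surjective : Function.Surjective (formRight Kv) :=
  fun n ↦ ⟨-n • Ev 0, by simp [formRight, form_Kv_s13, Ev]⟩

/-- for the configuration type `E₆`,
`T = {E₁−E₂, E₂−E₃, E₃−E₄, E₄−E₅, E₅−E₆, L−E₁−E₂−E₃}`, the subgroup `⟨T⟩` is exactly
`K^⊥ = {C : ⟨C,K⟩ = 0}`, the quotient `V/⟨T⟩` is isomorphic to `ℤ`, and the torsion
subgroup of `V/⟨T⟩` is trivial. -/
theorem type_E6 :
    ((AddSubgroup.closure ({Ev 0 - Ev 1, Ev 1 - Ev 2, Ev 2 - Ev 3, Ev 3 - Ev 4,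
        Ev 4 - Ev 5, Lv - Ev 0 - Ev 1 - Ev 2} : Set V) : Set V) = {C : V | form C Kv = 0}) ∧
    Nonempty ((V ⧸ AddSubgroup.closure ({Ev 0 - Ev 1, Ev 1 - Ev 2, Ev 2 - Ev 3, Ev 3 - Ev 4,
        Ev 4 - Ev 5, Lv - Ev 0 - Ev 1 - Ev 2} : Set V)) ≃+ ℤ) ∧
    Subsingleton (AddCommGroup.torsion
      (V ⧸ AddSubgroup.closure ({Ev 0 - Ev 1, Ev 1 - Ev 2, Ev 2 - Ev 3, Ev 3 - Ev 4,
        Ev 4 - Ev 5, Lv - Ev 0 - Ev 1 - Ev 2} : Set V))) := by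
  have e : V ⧸ AddSubgroup.closure typeE6 ≃+ ℤ :=
    (QuotientAddGroup.quotientAddEquivOfEq closure_typeE6_eq_ker).trans
      (QuotientAddGroup.quotientKerEquivOfSurjective _ formRight_Kv_surjective)
  exact ⟨congrArg SetLike.coe closure_typeE6_eq_ker, ⟨e⟩, subsingleton_torsion_of_addEquiv e⟩
end
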